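/- arXiv:math/0008021 — 8 statements merged into one kernel-verified Lean document; each statement's English description precedes it below -/
import Mathlib

section
/- Suppose w_1, …, w_m : ℝ → ℂ are differentiable and satisfy dw_j/dt = a_j · conj(w_1 ⋯ w_{j-1} w_{j+1} ⋯ w_m) for j = 1, …, m, where a_1, …, a_m ∈ ℝ with a_1 + ⋯ + a_m = 0. Then the function t ↦ |w_1(t)|² + ⋯ + |w_m(t)|² is constant. -/
/-!
Each `w j` contributes `2 ⟪w j, w j'⟫ = 2 a j Re (∏ k, w k)` to the derivative of
`∑ j, ‖w j‖ ^ 2`, because `conj (w j)` completes `conj (∏ k ≠ j, w k)` to the conjugate of the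
full product. Summing over `j` gives `2 (∑ j, a j) Re (∏ k, w k) = 0`.
-/

open Finset ComplexConjugate

lemma Complex.inner_ofReal_mul_conj_prod_erase {ι : Type*} [Fintype ι] [DecidableEq ι]
    (z : ι → ℂ) (c : ℝ) (j : ι) :
    inner ℝ (z j) ((c : ℂ) * conj (∏ k ∈ univ.erase j, z k)) = c * (∏ k, z k).re := by
  rw [Complex.inner, ← mul_prod_erase univ z (mem_univ j), mul_assoc, ← map_mul, mul_comm _ (z j),
    Complex.re_ofReal_mul, Complex.conj_re]

lemma hasDerivAt_sum_norm_sq_of_hasDerivAt_conj_prod_erase {ι : Type*} [Fintype ι]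
    [DecidableEq ι] (a : ι → ℝ) (w : ι → ℝ → ℂ) (t : ℝ)
    (hw : ∀ j, HasDerivAt (w j) ((a j : ℂ) * conj (∏ k ∈ univ.erase j, w k t)) t) :
    HasDerivAt (fun t => ∑ j, ‖w j t‖ ^ 2) (2 * (∑ j, a j) * (∏ k, w k t).re) t := by
  have hj := fun j (_ : j ∈ univ) => (hw j).norm_sq
  simp only [Complex.inner_ofReal_mul_conj_prod_erase (fun k => w k t)] at hj
  refine (HasDerivAt.fun_sum hj).congr_deriv ?_
  rw [← mul_sum, ← sum_mul, mul_assoc]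

theorem stmt4 {m : ℕ} (a : Fin m → ℝ) (hsum : ∑ j, a j = 0) (w : Fin m → ℝ → ℂ)
    (hw : ∀ j t, HasDerivAt (w j)
      ((a j : ℂ) * (starRingEnd ℂ) (∏ k ∈ Finset.univ.erase j, w k t)) t) :
    ∀ t s : ℝ, ∑ j, ‖w j t‖ ^ 2 = ∑ j, ‖w j s‖ ^ 2 := by
  have hderiv (t : ℝ) : HasDerivAt (fun t => ∑ j, ‖w j t‖ ^ 2) 0 t := by
    simpa only [hsum, mul_zero, zero_mul] using
      hasDerivAt_sum_norm_sq_of_hasDerivAt_conj_prod_erase a w t (fun j => hw j t)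
  exact is_const_of_deriv_eq_zero (fun t => (hderiv t).differentiableAt) (fun t => (hderiv t).deriv)
end

section
/- Suppose w_1, …, w_m : ℝ → ℂ are differentiable and satisfy dw_j/dt = a_j · conj(w_1 ⋯ w_{j-1} w_{j+1} ⋯ w_m) for j = 1, …, m, where a_1, …, a_m ∈ ℝ. Then the function t ↦ Im(w_1(t) w_2(t) ⋯ w_m(t)) is constant. -/
/-! Each summand of the Leibniz derivative of `∏ j, w j` is `a j * |∏_{k ≠ j} w k|²`, which is
real, so the imaginary part of the product has derivative zero. -/

open Finset

lemma Complex.im_mul_ofReal_mul_conj (z : ℂ) (r : ℝ) : (z * (r * starRingEnd ℂ z)).im = 0 := by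
  rw [mul_left_comm, Complex.mul_conj, ← Complex.ofReal_mul, Complex.ofReal_im]

lemma hasDerivAt_im_prod_of_hasDerivAt_conj_prod_erase {ι : Type*} [Fintype ι] [DecidableEq ι]
    (a : ι → ℝ → ℝ) (w : ι → ℝ → ℂ)
    (hw : ∀ j t, HasDerivAt (w j) ((a j t : ℂ) * starRingEnd ℂ (∏ k ∈ univ.erase j, w k t)) t)
    (t : ℝ) : HasDerivAt (fun t => (∏ j, w j t).im) 0 t := by
  have hprod := HasDerivAt.fun_finsetProd (u := univ) (fun j _ => hw j t)
  refine (Complex.imCLM.hasFDerivAt.comp_hasDerivAt t hprod).congr_deriv ?_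
  simp only [Complex.imCLM_apply, Complex.im_sum, smul_eq_mul, Complex.im_mul_ofReal_mul_conj,
    sum_const_zero]

theorem stmt5 {m : ℕ} (a : Fin m → ℝ) (w : Fin m → ℝ → ℂ)
    (hw : ∀ j t, HasDerivAt (w j)
      ((a j : ℂ) * (starRingEnd ℂ) (∏ k ∈ Finset.univ.erase j, w k t)) t) :
    ∀ t s : ℝ, (∏ j, w j t).im = (∏ j, w j s).im := by
  have hderiv := hasDerivAt_im_prod_of_hasDerivAt_conj_prod_erase (fun j _ => a j) w hw
  exact is_const_of_deriv_eq_zero (fun t => (hderiv t).differentiableAt) (fun t => (hderiv t).deriv)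
end

section
/- Suppose u, θ : ℝ → ℝ are differentiable functions satisfying du/dt = 2 Q(u)^{1/2} cos θ and dθ/dt = −Q(u)^{1/2} sin θ · ∑_{j=1}^m a_j/(a_j u + 1), where Q(u) = ∏_{j=1}^m (a_j u + 1) and a_j u(t) + 1 > 0 for all j and t. Then the function t ↦ Q(u(t))^{1/2} sin θ(t) is constant. -/
/-!
Along a solution, `(log √Q(u))' = (1/2) (∑ aⱼ/(aⱼu + 1)) u' = √Q(u) (∑ aⱼ/(aⱼu + 1)) cos θ`,
so `(√Q(u) sin θ)' = √Q(u) sin θ · (log √Q(u))' + √Q(u) cos θ · θ'`, and the two terms cancel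
by the equation for `θ'`.
-/

open Finset

theorem HasDerivAt.finsetProd_eq_mul_sum_div {ι 𝕜 : Type*} [NontriviallyNormedField 𝕜]
    {s : Finset ι} {f : ι → 𝕜 → 𝕜} {f' : ι → 𝕜} {x : 𝕜}
    (hf : ∀ i ∈ s, HasDerivAt (f i) (f' i) x) (hne : ∀ i ∈ s, f i x ≠ 0) :
    HasDerivAt (∏ i ∈ s, f i ·) ((∏ i ∈ s, f i x) * ∑ i ∈ s, f' i / f i x) x := by
  classical
  refine (HasDerivAt.fun_finsetProd hf).congr_deriv ?_
  rw [mul_sum]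
  refine sum_congr rfl fun i hi => ?_
  rw [← mul_prod_erase s (f · x) hi, smul_eq_mul]
  field_simp [hne i hi]

theorem HasDerivAt.sqrt_of_eq_mul {g : ℝ → ℝ} {c x : ℝ}
    (hg : HasDerivAt g (g x * c) x) (hpos : 0 < g x) :
    HasDerivAt (fun y => √(g y)) (√(g x) * c / 2) x := by
  refine (hg.sqrt hpos.ne').congr_deriv ?_
  have hsqrt : √(g x) ≠ 0 := (Real.sqrt_pos.mpr hpos).ne'
  field_simp
  rw [Real.sq_sqrt hpos.le, mul_comm]

theorem hasDerivAt_sqrt_prod_affine {m : ℕ} (a : Fin m → ℝ) {u : ℝ → ℝ} {u' t : ℝ}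
    (hu : HasDerivAt u u' t) (hpos : ∀ j, 0 < a j * u t + 1) :
    HasDerivAt (fun t => √(∏ j, (a j * u t + 1)))
      (√(∏ j, (a j * u t + 1)) * (∑ j, a j / (a j * u t + 1)) * u' / 2) t := by
  have hprod := HasDerivAt.finsetProd_eq_mul_sum_div (s := univ) (x := t)
    (fun j _ => (hu.const_mul (a j)).add_const 1) (fun j _ => (hpos j).ne')
  have hsqrt := hprod.sqrt_of_eq_mul (prod_pos fun j _ => hpos j)
  convert hsqrt using 1
  rw [mul_assoc, sum_mul]
  simp only [div_mul_eq_mul_div]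

theorem stmt7 {m : ℕ} (a : Fin m → ℝ) (u θ : ℝ → ℝ)
    (hpos : ∀ (j : Fin m) (t : ℝ), 0 < a j * u t + 1)
    (hu : ∀ t, HasDerivAt u
      (2 * Real.sqrt (∏ j, (a j * u t + 1)) * Real.cos (θ t)) t)
    (hθ : ∀ t, HasDerivAt θ
      (-(Real.sqrt (∏ j, (a j * u t + 1)) * Real.sin (θ t)
          * ∑ j, a j / (a j * u t + 1))) t) :
    ∀ t s : ℝ, Real.sqrt (∏ j, (a j * u t + 1)) * Real.sin (θ t)
      = Real.sqrt (∏ j, (a j * u s + 1)) * Real.sin (θ s) := by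
  have hderiv : ∀ t, HasDerivAt
      (fun t => Real.sqrt (∏ j, (a j * u t + 1)) * Real.sin (θ t)) 0 t := fun t =>
    ((hasDerivAt_sqrt_prod_affine a (hu t) (hpos · t)).mul
      ((hθ t).sin)).congr_deriv (by ring)
  intro t s
  exact is_const_of_deriv_eq_zero (fun t => (hderiv t).differentiableAt)
    (fun t => (hderiv t).deriv) t s
end

section
/- Let a_1 ≤ ⋯ ≤ a_m be real numbers, not all zero, with a_1 + ⋯ + a_m = 0, Q(u) = ∏_{j=1}^m(a_j u + 1), and A ∈ (0,1). Then there exist α ∈ (−1/a_m, 0) and β ∈ (0, −1/a_1) with Q(α) = Q(β) = A², and Q(u) > A² for all u ∈ (α, β). -/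
theorem stmt9 {m : ℕ} (hm : 2 ≤ m) (a : Fin m → ℝ) (hmono : Monotone a)
    (hne : ∃ j, a j ≠ 0) (hsum : ∑ j, a j = 0) (A : ℝ) (hA : A ∈ Set.Ioo (0 : ℝ) 1) :
    ∃ α β : ℝ, α ∈ Set.Ioo (-1 / a ⟨m - 1, by omega⟩) 0 ∧
      β ∈ Set.Ioo 0 (-1 / a ⟨0, by omega⟩) ∧
      (∏ j, (a j * α + 1)) = A ^ 2 ∧ (∏ j, (a j * β + 1)) = A ^ 2 ∧
      ∀ u ∈ Set.Ioo α β, A ^ 2 < ∏ j, (a j * u + 1) := by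
  obtain ⟨hA0, hA1⟩ := hA
  have hA2 : (0:ℝ) < A ^ 2 := by positivity
  have hA2' : A ^ 2 < 1 := by nlinarith
  set i0 : Fin m := ⟨0, by omega⟩ with hi0
  set im : Fin m := ⟨m - 1, by omega⟩ with him
  set Q : ℝ → ℝ := fun u => ∏ j, (a j * u + 1) with hQ
  have hQc : Continuous Q := by
    apply continuous_finset_prod
    intro j _
    continuity
  have hle : ∀ j, a i0 ≤ a j ∧ a j ≤ a im := fun j =>
    ⟨hmono (by simp [Fin.le_def, hi0]), hmono (by simp [Fin.le_def, him]; omega)⟩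
  have ha1 : a i0 < 0 := by
    by_contra h
    push_neg at h
    have hnn : ∀ j ∈ Finset.univ, 0 ≤ a j := fun j _ => le_trans h (hle j).1
    obtain ⟨j, hj⟩ := hne
    exact hj ((Finset.sum_eq_zero_iff_of_nonneg hnn).1 hsum j (Finset.mem_univ j))
  have ham : 0 < a im := by
    by_contra h
    push_neg at h
    have hnp : ∀ j ∈ Finset.univ, a j ≤ 0 := fun j _ => le_trans (hle j).2 h
    obtain ⟨j, hj⟩ := hne
    exact hj ((Finset.sum_eq_zero_iff_of_nonpos hnp).1 hsum j (Finset.mem_univ j))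
  have hQ0 : Q 0 = 1 := by simp [hQ]
  have hQm : Q (-1 / a im) = 0 := by
    apply Finset.prod_eq_zero (Finset.mem_univ im)
    have : a im * (-1 / a im) = -1 := by field_simp
    linarith
  have hQ1 : Q (-1 / a i0) = 0 := by
    apply Finset.prod_eq_zero (Finset.mem_univ i0)
    have : a i0 * (-1 / a i0) = -1 := by
      rw [mul_div_assoc', mul_neg_one, neg_div, div_self ha1.ne]
    linarith
  have hmneg : -1 / a im < 0 := div_neg_of_neg_of_pos (by norm_num) ham
  have h1pos : (0:ℝ) < -1 / a i0 := div_pos_of_neg_of_neg (by norm_num) ha1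
  -- Left side
  set S₁ : Set ℝ := Set.Icc (-1 / a im) 0 ∩ Q ⁻¹' {A ^ 2} with hS₁
  have hcomp₁ : IsCompact S₁ := isCompact_Icc.inter_right (isClosed_singleton.preimage hQc)
  have hne₁ : S₁.Nonempty := by
    have hsub := intermediate_value_Icc hmneg.le hQc.continuousOn
    have hmem : A ^ 2 ∈ Set.Icc (Q (-1 / a im)) (Q 0) := by
      rw [hQm, hQ0]; exact ⟨hA2.le, hA2'.le⟩
    obtain ⟨w, hw, hQw⟩ := hsub hmem
    exact ⟨w, hw, hQw⟩
  set α := sSup S₁ with hα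
  have hαmem : α ∈ S₁ := hcomp₁.sSup_mem hne₁
  obtain ⟨hαIcc, hQα'⟩ := hαmem
  have hQα : Q α = A ^ 2 := hQα'
  have hα1 : -1 / a im < α := by
    rcases lt_or_eq_of_le hαIcc.1 with h | h
    · exact h
    · exfalso; rw [← h, hQm] at hQα; linarith
  have hα2 : α < 0 := by
    rcases lt_or_eq_of_le hαIcc.2 with h | h
    · exact h
    · exfalso; rw [h, hQ0] at hQα; linarith
  -- Right side
  set S₂ : Set ℝ := Set.Icc 0 (-1 / a i0) ∩ Q ⁻¹' {A ^ 2} with hS₂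
  have hcomp₂ : IsCompact S₂ := isCompact_Icc.inter_right (isClosed_singleton.preimage hQc)
  have hne₂ : S₂.Nonempty := by
    have hsub := intermediate_value_Icc' h1pos.le hQc.continuousOn
    have hmem : A ^ 2 ∈ Set.Icc (Q (-1 / a i0)) (Q 0) := by
      rw [hQ1, hQ0]; exact ⟨hA2.le, hA2'.le⟩
    obtain ⟨w, hw, hQw⟩ := hsub hmem
    exact ⟨w, hw, hQw⟩
  set β := sInf S₂ with hβ
  have hβmem : β ∈ S₂ := hcomp₂.sInf_mem hne₂
  obtain ⟨hβIcc, hQβ'⟩ := hβmem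
  have hQβ : Q β = A ^ 2 := hQβ'
  have hβ1 : 0 < β := by
    rcases lt_or_eq_of_le hβIcc.1 with h | h
    · exact h
    · exfalso; rw [← h, hQ0] at hQβ; linarith
  have hβ2 : β < -1 / a i0 := by
    rcases lt_or_eq_of_le hβIcc.2 with h | h
    · exact h
    · exfalso; rw [h, hQ1] at hQβ; linarith
  refine ⟨α, β, ⟨hα1, hα2⟩, ⟨hβ1, hβ2⟩, hQα, hQβ, ?_⟩
  rintro u ⟨hu1, hu2⟩
  by_contra h
  push_neg at h
  rcases le_or_gt u 0 with hu0 | hu0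
  · -- use IVT on [u, 0]
    have hsub := intermediate_value_Icc hu0 hQc.continuousOn
    have hmem : A ^ 2 ∈ Set.Icc (Q u) (Q 0) := by rw [hQ0]; exact ⟨h, hA2'.le⟩
    obtain ⟨w, hw, hQw⟩ := hsub hmem
    have hwS : w ∈ S₁ := ⟨⟨le_trans hα1.le (le_trans hu1.le hw.1), hw.2⟩, hQw⟩
    have : w ≤ α := le_csSup hcomp₁.bddAbove hwS
    have : u ≤ α := le_trans hw.1 this
    linarith
  · -- use IVT on [0, u]
    have hsub := intermediate_value_Icc' hu0.le hQc.continuousOn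
    have hmem : A ^ 2 ∈ Set.Icc (Q u) (Q 0) := by rw [hQ0]; exact ⟨h, hA2'.le⟩
    obtain ⟨w, hw, hQw⟩ := hsub hmem
    have hwS : w ∈ S₂ := ⟨⟨hw.1, le_trans hw.2 (le_trans hu2.le hβ2.le)⟩, hQw⟩
    have : β ≤ w := csInf_le hcomp₂.bddBelow hwS
    have : β ≤ u := le_trans this hw.2
    linarith
end

section
/- Let a_1 ≤ ⋯ ≤ a_m be real numbers, not all zero, with a_1 + ⋯ + a_m = 0. Then π(a_m − a_1) ≤ π(2 ∑_{j=1}^m a_j²)^{1/2}, with equality if and only if a_1 + a_m = 0 and a_2 = ⋯ = a_{m-1} = 0. -/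
theorem stmt10 {m : ℕ} (hm : 3 ≤ m) (a : Fin m → ℝ) (hmono : Monotone a)
    (hne : ∃ j, a j ≠ 0) (hsum : ∑ j, a j = 0) :
    Real.pi * (a ⟨m - 1, by omega⟩ - a ⟨0, by omega⟩)
      ≤ Real.pi * Real.sqrt (2 * ∑ j, a j ^ 2) ∧
    (Real.pi * (a ⟨m - 1, by omega⟩ - a ⟨0, by omega⟩)
        = Real.pi * Real.sqrt (2 * ∑ j, a j ^ 2) ↔
      a ⟨0, by omega⟩ + a ⟨m - 1, by omega⟩ = 0 ∧
        ∀ j : Fin m, j.val ≠ 0 → j.val ≠ m - 1 → a j = 0) := by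
  set i0 : Fin m := ⟨0, by omega⟩ with hi0
  set i1 : Fin m := ⟨m - 1, by omega⟩ with hi1
  have hmR : (0:ℝ) < m := by exact_mod_cast (by omega : 0 < m)
  have hle0 : ∀ j : Fin m, i0 ≤ j := fun j => Fin.le_def.mpr (Nat.zero_le _)
  have hle1 : ∀ j : Fin m, j ≤ i1 := fun j => Fin.le_def.mpr (by have := j.isLt; simp [hi1]; omega)
  have hA : a i0 ≤ 0 := by
    have h1 : (Finset.univ : Finset (Fin m)).card • a i0 ≤ ∑ j, a j :=
      Finset.card_nsmul_le_sum _ _ _ (fun j _ => hmono (hle0 j))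
    rw [hsum] at h1
    simp only [Finset.card_univ, Fintype.card_fin, nsmul_eq_mul] at h1
    nlinarith
  have hB : 0 ≤ a i1 := by
    have h1 : ∑ j, a j ≤ (Finset.univ : Finset (Fin m)).card • a i1 :=
      Finset.sum_le_card_nsmul _ _ _ (fun j _ => hmono (hle1 j))
    rw [hsum] at h1
    simp only [Finset.card_univ, Fintype.card_fin, nsmul_eq_mul] at h1
    nlinarith
  have hne01 : i0 ≠ i1 := by
    intro h
    have : (0:ℕ) = m - 1 := congrArg Fin.val h
    omega
  set T : Finset (Fin m) := Finset.univ \ {i0, i1} with hT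
  have hsplit : ∑ j, a j ^ 2 = a i0 ^ 2 + a i1 ^ 2 + ∑ j ∈ T, a j ^ 2 := by
    have hsub : ({i0, i1} : Finset (Fin m)) ⊆ Finset.univ := Finset.subset_univ _
    rw [← Finset.sum_sdiff hsub, Finset.sum_pair hne01, ← hT]
    ring
  have hTnn : 0 ≤ ∑ j ∈ T, a j ^ 2 :=
    Finset.sum_nonneg (fun j _ => sq_nonneg _)
  have key : 2 * ∑ j, a j ^ 2
      = (a i1 - a i0) ^ 2 + (a i0 + a i1) ^ 2 + 2 * ∑ j ∈ T, a j ^ 2 := by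
    rw [hsplit]; ring
  have hBA : 0 ≤ a i1 - a i0 := by linarith
  have hSnn : 0 ≤ 2 * ∑ j, a j ^ 2 := by nlinarith [sq_nonneg (a i0 + a i1)]
  have hsq : (a i1 - a i0) ^ 2 ≤ 2 * ∑ j, a j ^ 2 := by
    nlinarith [sq_nonneg (a i0 + a i1)]
  have hsqrt : a i1 - a i0 ≤ Real.sqrt (2 * ∑ j, a j ^ 2) :=
    (Real.le_sqrt hBA hSnn).mpr hsq
  refine ⟨mul_le_mul_of_nonneg_left hsqrt Real.pi_pos.le, ?_, ?_⟩
  · intro heq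
    have h2 : a i1 - a i0 = Real.sqrt (2 * ∑ j, a j ^ 2) :=
      mul_left_cancel₀ Real.pi_ne_zero heq
    have h3 : (a i1 - a i0) ^ 2 = 2 * ∑ j, a j ^ 2 := by
      rw [h2, Real.sq_sqrt hSnn]
    have hAB2 : (a i0 + a i1) ^ 2 + 2 * ∑ j ∈ T, a j ^ 2 = 0 := by linarith
    have hAB : a i0 + a i1 = 0 := by
      nlinarith [sq_nonneg (a i0 + a i1)]
    have hT0 : ∑ j ∈ T, a j ^ 2 = 0 := by nlinarith [sq_nonneg (a i0 + a i1)]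
    refine ⟨hAB, fun j hj0 hj1 => ?_⟩
    have hjT : j ∈ T := by
      simp only [hT, Finset.mem_sdiff, Finset.mem_univ, Finset.mem_insert,
        Finset.mem_singleton, true_and]
      push_neg
      constructor <;> simp [hi0, hi1, Fin.ext_iff] <;> omega
    have := (Finset.sum_eq_zero_iff_of_nonneg (fun j _ => sq_nonneg (a j))).mp hT0 j hjT
    exact pow_eq_zero_iff (by norm_num) |>.mp this
  · rintro ⟨hAB, hmid⟩
    have hT0 : ∑ j ∈ T, a j ^ 2 = 0 := by
      apply Finset.sum_eq_zero
      intro j hj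
      simp only [hT, Finset.mem_sdiff, Finset.mem_univ, Finset.mem_insert,
        Finset.mem_singleton, true_and] at hj
      push_neg at hj
      have hj0 : j.val ≠ 0 := fun h => hj.1 (by simp [hi0, Fin.ext_iff, h])
      have hj1 : j.val ≠ m - 1 := fun h => hj.2 (by simp [hi1, Fin.ext_iff, h])
      rw [hmid j hj0 hj1]; ring
    have h3 : 2 * ∑ j, a j ^ 2 = (a i1 - a i0) ^ 2 := by
      rw [key, hT0, hAB]; ring
    rw [h3, Real.sqrt_sq hBA]
end

section
/- Suppose s, c, d : ℝ → ℝ are differentiable with s' = c·d, c' = −s·d, d' = −k² s·c, s(0)=0, c(0)=1, d(0)=1, where k ∈ ℝ. Then for all t: s(t)² + c(t)² = 1 and k² s(t)² + d(t)² = 1. Moreover if k = 0 then s(t) = sin t, c(t) = cos t, d(t) = 1, and if k = 1 then s(t) = tanh t and c(t) = d(t) = sech t. -/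
/-!
Both identities hold because `s² + c²` and `k² s² + d²` are first integrals of the system.
For `k = 0`, `d` is constant, so `(s, c)` solves the harmonic oscillator and the squared distance
`(s - sin)² + (c - cos)²` is a first integral vanishing at `0`. For `k = 1`, `c - d` and `s - tanh`
both solve linear equations `g' = a g` with `g 0 = 0`, hence vanish (integrating factor), and then
`d · cosh` is a first integral.
-/

open Real

lemma eq_of_hasDerivAt_eq_zero {f : ℝ → ℝ} (hf : ∀ t, HasDerivAt f 0 t) (t : ℝ) : f t = f 0 :=
  is_const_of_deriv_eq_zero (fun x => (hf x).differentiableAt) (fun x => (hf x).deriv) t 0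

lemma eq_zero_of_hasDerivAt_mul_self {g a : ℝ → ℝ} (ha : Continuous a)
    (hg : ∀ t, HasDerivAt g (a t * g t) t) (hg0 : g 0 = 0) (t : ℝ) : g t = 0 := by
  set A : ℝ → ℝ := fun t => ∫ x in (0 : ℝ)..t, a x
  have hA (t : ℝ) : HasDerivAt A (a t) t := (ha.integral_hasStrictDerivAt 0 t).hasDerivAt
  have hconst (t : ℝ) : HasDerivAt (fun t => g t * exp (-A t)) 0 t := by
    refine ((hg t).mul (hA t).neg.exp).congr_deriv ?_
    ring
  simpa [hg0] using eq_of_hasDerivAt_eq_zero hconst t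

lemma Real.hasDerivAt_tanh (t : ℝ) : HasDerivAt tanh (1 - tanh t ^ 2) t := by
  have hcosh : cosh t ≠ 0 := (cosh_pos t).ne'
  rw [show tanh = fun x => sinh x / cosh x from funext tanh_eq_sinh_div_cosh]
  refine ((hasDerivAt_sinh t).div (hasDerivAt_cosh t) hcosh).congr_deriv ?_
  field_simp

lemma eq_sin_cos_of_hasDerivAt {s c : ℝ → ℝ} (hs : ∀ t, HasDerivAt s (c t) t)
    (hc : ∀ t, HasDerivAt c (-s t) t) (hs0 : s 0 = 0) (hc0 : c 0 = 1) (t : ℝ) :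
    s t = sin t ∧ c t = cos t := by
  have hconst (t : ℝ) :
      HasDerivAt (fun t => (s t - sin t) ^ 2 + (c t - cos t) ^ 2) 0 t := by
    refine ((((hs t).sub (hasDerivAt_sin t)).pow 2).add
      (((hc t).sub (hasDerivAt_cos t)).pow 2)).congr_deriv ?_
    simp only [Pi.sub_apply]
    ring
  have hdist : (s t - sin t) ^ 2 + (c t - cos t) ^ 2 = 0 := by
    simpa [hs0, hc0] using eq_of_hasDerivAt_eq_zero hconst t
  obtain ⟨hs', hc'⟩ := (add_eq_zero_iff_of_nonneg (sq_nonneg _) (sq_nonneg _)).1 hdist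
  exact ⟨sub_eq_zero.1 (pow_eq_zero_iff two_ne_zero |>.1 hs'),
    sub_eq_zero.1 (pow_eq_zero_iff two_ne_zero |>.1 hc')⟩

section Jacobi

variable {k : ℝ} {s c d : ℝ → ℝ}

theorem jacobi_sq_add_sq (hs : ∀ t, HasDerivAt s (c t * d t) t)
    (hc : ∀ t, HasDerivAt c (-(s t * d t)) t) (hs0 : s 0 = 0) (hc0 : c 0 = 1) (t : ℝ) :
    s t ^ 2 + c t ^ 2 = 1 := by
  have hconst (t : ℝ) : HasDerivAt (fun t => s t ^ 2 + c t ^ 2) 0 t := by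
    refine (((hs t).pow 2).add ((hc t).pow 2)).congr_deriv ?_
    ring
  simpa [hs0, hc0] using eq_of_hasDerivAt_eq_zero hconst t

theorem jacobi_sq_mul_add_sq (hs : ∀ t, HasDerivAt s (c t * d t) t)
    (hd : ∀ t, HasDerivAt d (-(k ^ 2 * s t * c t)) t) (hs0 : s 0 = 0) (hd0 : d 0 = 1) (t : ℝ) :
    k ^ 2 * s t ^ 2 + d t ^ 2 = 1 := by
  have hconst (t : ℝ) : HasDerivAt (fun t => k ^ 2 * s t ^ 2 + d t ^ 2) 0 t := by
    refine ((((hs t).pow 2).const_mul (k ^ 2)).add ((hd t).pow 2)).congr_deriv ?_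
    ring
  simpa [hs0, hd0] using eq_of_hasDerivAt_eq_zero hconst t

theorem jacobi_cn_eq_dn_of_modulus_one (hs : ∀ t, HasDerivAt s (c t * d t) t)
    (hc : ∀ t, HasDerivAt c (-(s t * d t)) t) (hd : ∀ t, HasDerivAt d (-(s t * c t)) t)
    (hc0 : c 0 = 1) (hd0 : d 0 = 1) (t : ℝ) : c t = d t := by
  have hs_cont : Continuous s := continuous_iff_continuousAt.2 fun t => (hs t).continuousAt
  refine sub_eq_zero.1 (eq_zero_of_hasDerivAt_mul_self (g := fun t => c t - d t) hs_cont
    (fun t => ?_) (by simp [hc0, hd0]) t)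
  refine ((hc t).sub (hd t)).congr_deriv ?_
  ring

theorem jacobi_eq_tanh_sech_of_modulus_one (hs : ∀ t, HasDerivAt s (c t * d t) t)
    (hc : ∀ t, HasDerivAt c (-(s t * d t)) t) (hd : ∀ t, HasDerivAt d (-(s t * c t)) t)
    (hs0 : s 0 = 0) (hc0 : c 0 = 1) (hd0 : d 0 = 1) (t : ℝ) :
    s t = tanh t ∧ c t = 1 / cosh t ∧ d t = 1 / cosh t := by
  have hcd := jacobi_cn_eq_dn_of_modulus_one hs hc hd hc0 hd0
  have hsd := jacobi_sq_mul_add_sq (k := 1) hs (by simpa using hd) hs0 hd0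
  have hs_cont : Continuous s := continuous_iff_continuousAt.2 fun t => (hs t).continuousAt
  have htanh_cont : Continuous tanh :=
    continuous_iff_continuousAt.2 fun t => (hasDerivAt_tanh t).continuousAt
  -- `s' = c d = d² = 1 - s²`, the Riccati equation solved by `tanh`
  have hst (t : ℝ) : s t = tanh t := by
    refine sub_eq_zero.1 (eq_zero_of_hasDerivAt_mul_self (g := fun t => s t - tanh t)
      (a := fun t => -(s t + tanh t)) (hs_cont.add htanh_cont).neg (fun t => ?_) (by simp [hs0]) t)
    refine ((hs t).sub (hasDerivAt_tanh t)).congr_deriv ?_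
    linear_combination d t * hcd t + hsd t
  have hdcosh (t : ℝ) : HasDerivAt (fun t => d t * cosh t) 0 t := by
    refine ((hd t).mul (hasDerivAt_cosh t)).congr_deriv ?_
    rw [hst, hcd, tanh_eq_sinh_div_cosh]
    field_simp
    ring
  have hdt : d t = 1 / cosh t := by
    rw [eq_div_iff (cosh_pos t).ne']
    simpa [hd0] using eq_of_hasDerivAt_eq_zero hdcosh t
  exact ⟨hst t, hcd t ▸ hdt, hdt⟩

end Jacobi

theorem stmt14 (k : ℝ) (s c d : ℝ → ℝ)
    (hs : ∀ t, HasDerivAt s (c t * d t) t)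
    (hc : ∀ t, HasDerivAt c (-(s t * d t)) t)
    (hd : ∀ t, HasDerivAt d (-(k ^ 2 * s t * c t)) t)
    (hs0 : s 0 = 0) (hc0 : c 0 = 1) (hd0 : d 0 = 1) :
    (∀ t : ℝ, s t ^ 2 + c t ^ 2 = 1 ∧ k ^ 2 * s t ^ 2 + d t ^ 2 = 1) ∧
    (k = 0 → ∀ t : ℝ, s t = Real.sin t ∧ c t = Real.cos t ∧ d t = 1) ∧
    (k = 1 → ∀ t : ℝ, s t = Real.tanh t ∧ c t = 1 / Real.cosh t ∧ d t = 1 / Real.cosh t) := by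
  refine ⟨fun t => ⟨jacobi_sq_add_sq hs hc hs0 hc0 t, jacobi_sq_mul_add_sq hs hd hs0 hd0 t⟩,
    ?_, ?_⟩
  · rintro rfl t
    have hd1 (t : ℝ) : d t = 1 :=
      hd0 ▸ eq_of_hasDerivAt_eq_zero (fun t => by simpa using hd t) t
    obtain ⟨hst, hct⟩ := eq_sin_cos_of_hasDerivAt (fun t => by simpa [hd1] using hs t)
      (fun t => by simpa [hd1] using hc t) hs0 hc0 t
    exact ⟨hst, hct, hd1 t⟩
  · rintro rfl
    exact jacobi_eq_tanh_sech_of_modulus_one hs hc (fun t => by simpa using hd t) hs0 hc0 hd0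
end

section
/- On ℂ^m with symplectic form ω = (i/2) ∑_j a_j^{-1} dw_j ∧ d conj(w_j) (a_j ∈ ℝ nonzero), the functions p_j = a_m |w_j|² − a_j |w_m|² for j = 1,…,m−1 and p_m = Im(w_1 ⋯ w_m) pairwise Poisson-commute: {p_i, p_j} = 0 for all i, j. -/
/-!
The function `‖w k‖ ^ 2` generates the rotation of the `k`-th coordinate:
`{‖w k‖ ^ 2, g} = -2 a_k dg (I • w_k e_k)`. This rotation preserves every `‖w l‖ ^ 2`, and moves
`Im (w_1 ⋯ w_m)` at rate `Re (w_1 ⋯ w_m)`, so `{p_j, p_m} = -2 (a_m a_j - a_j a_m) Re (w_1 ⋯ w_m) = 0`.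
-/

open Complex Finset

noncomputable section

variable {ι : Type*} [DecidableEq ι]

/-- The Poisson bracket `{f, g} w` is `poissonForm a (fderiv ℝ f w) (fderiv ℝ g w)`:
`L (Pi.single k 1)` and `L (Pi.single k I)` are the `x_k`- and `y_k`-components of `L`. -/
def poissonForm [Fintype ι] (a : ι → ℝ) (L M : (ι → ℂ) →L[ℝ] ℝ) : ℝ :=
  ∑ k, a k * (L (Pi.single k I) * M (Pi.single k 1) - L (Pi.single k 1) * M (Pi.single k I))

def normSqDeriv [Fintype ι] (w : ι → ℂ) (k : ι) : (ι → ℂ) →L[ℝ] ℝ :=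
  (2 • innerSL ℝ (w k)).comp (ContinuousLinearMap.proj k)

def imProdDeriv [Fintype ι] (w : ι → ℂ) : (ι → ℂ) →L[ℝ] ℝ :=
  imCLM.comp (∑ i, (∏ j ∈ univ.erase i, w j) • ContinuousLinearMap.proj i)

lemma apply_single_I_mul (M : (ι → ℂ) →L[ℝ] ℝ) (k : ι) (z : ℂ) :
    M (Pi.single k (I * z)) = -z.im * M (Pi.single k 1) + z.re * M (Pi.single k I) := by
  have : (Pi.single k (I * z) : ι → ℂ) =
      (-z.im) • (Pi.single k 1 : ι → ℂ) + z.re • (Pi.single k I : ι → ℂ) := by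
    rw [← Pi.single_smul, ← Pi.single_smul, ← Pi.single_add]
    congr 1
    apply Complex.ext <;> simp
  rw [this, map_add, map_smul, map_smul, smul_eq_mul, smul_eq_mul]

variable [Fintype ι] (a : ι → ℝ)

lemma poissonForm_comm (L M : (ι → ℂ) →L[ℝ] ℝ) : poissonForm a L M = -poissonForm a M L := by
  rw [poissonForm, poissonForm, ← sum_neg_distrib]
  exact sum_congr rfl fun _ _ => by ring

lemma poissonForm_self (L : (ι → ℂ) →L[ℝ] ℝ) : poissonForm a L L = 0 :=
  sum_eq_zero fun _ _ => by ring

lemma poissonForm_sub_smul_left (c d : ℝ) (L₁ L₂ M : (ι → ℂ) →L[ℝ] ℝ) :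
    poissonForm a (c • L₁ - d • L₂) M = c * poissonForm a L₁ M - d * poissonForm a L₂ M := by
  simp only [poissonForm, mul_sum, ← sum_sub_distrib]
  refine sum_congr rfl fun _ _ => ?_
  simp only [sub_apply, smul_apply, smul_eq_mul]
  ring

omit [DecidableEq ι] in
lemma hasFDerivAt_norm_sq_apply (w : ι → ℂ) (k : ι) :
    HasFDerivAt (fun w : ι → ℂ => ‖w k‖ ^ 2) (normSqDeriv w k) w :=
  (hasFDerivAt_apply k w).norm_sq

lemma hasFDerivAt_im_prod (w : ι → ℂ) :
    HasFDerivAt (fun w : ι → ℂ => (∏ j, w j).im) (imProdDeriv w) w :=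
  imCLM.hasFDerivAt.comp w (hasFDerivAt_finsetProd (𝕜 := ℝ))

lemma normSqDeriv_single (w : ι → ℂ) (k l : ι) (v : ℂ) :
    normSqDeriv w k (Pi.single l v) = if l = k then 2 * inner ℝ (w k) v else 0 := by
  by_cases h : l = k
  · subst h
    simp [normSqDeriv]
    ring
  · simp [normSqDeriv, h, Ne.symm h]

lemma normSqDeriv_single_I_mul (w : ι → ℂ) (k l : ι) :
    normSqDeriv w l (Pi.single k (I * w k)) = 0 := by
  rw [normSqDeriv_single]
  split_ifs with h
  · subst h
    simp
    ring
  · rfl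

lemma imProdDeriv_single (w : ι → ℂ) (k : ι) (v : ℂ) :
    imProdDeriv w (Pi.single k v) = ((∏ j ∈ univ.erase k, w j) * v).im := by
  simp [imProdDeriv, Pi.single_apply]

lemma poissonForm_normSqDeriv_left (w : ι → ℂ) (k : ι) (M : (ι → ℂ) →L[ℝ] ℝ) :
    poissonForm a (normSqDeriv w k) M = -2 * a k * M (Pi.single k (I * w k)) := by
  rw [poissonForm, sum_eq_single k (fun l _ hl => by simp [normSqDeriv_single, hl]) (by simp),
    apply_single_I_mul]
  simp [normSqDeriv_single]
  ring

lemma poissonForm_normSqDeriv_imProdDeriv (w : ι → ℂ) (k : ι) :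
    poissonForm a (normSqDeriv w k) (imProdDeriv w) = -2 * a k * (∏ j, w j).re := by
  rw [poissonForm_normSqDeriv_left, imProdDeriv_single, ← mul_prod_erase univ w (mem_univ k)]
  simp [mul_comm, mul_left_comm]

lemma poissonForm_normSqDeriv_sub_imProdDeriv (w : ι → ℂ) (c i : ι) :
    poissonForm a (a c • normSqDeriv w i - a i • normSqDeriv w c) (imProdDeriv w) = 0 := by
  rw [poissonForm_sub_smul_left, poissonForm_normSqDeriv_imProdDeriv,
    poissonForm_normSqDeriv_imProdDeriv]
  ring

lemma poissonForm_normSqDeriv_sub_normSqDeriv_sub (w : ι → ℂ) (c i j : ι) :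
    poissonForm a (a c • normSqDeriv w i - a i • normSqDeriv w c)
      (a c • normSqDeriv w j - a j • normSqDeriv w c) = 0 := by
  simp [poissonForm_sub_smul_left, poissonForm_normSqDeriv_left, normSqDeriv_single_I_mul]

end

theorem stmt17 {m : ℕ} (hm : 0 < m) (a : Fin m → ℝ)
    (p : Fin m → (Fin m → ℂ) → ℝ)
    (hpj : ∀ i : Fin m, i.val < m - 1 → ∀ w : Fin m → ℂ,
      p i w = a ⟨m - 1, by omega⟩ * ‖w i‖ ^ 2 - a i * ‖w ⟨m - 1, by omega⟩‖ ^ 2)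
    (hpm : ∀ w : Fin m → ℂ, p ⟨m - 1, by omega⟩ w = (∏ j, w j).im) :
    ∀ (i j : Fin m) (w : Fin m → ℂ),
      ∑ k, a k *
        ((fderiv ℝ (p i) w (Pi.single k Complex.I)) * (fderiv ℝ (p j) w (Pi.single k 1))
          - (fderiv ℝ (p i) w (Pi.single k 1)) * (fderiv ℝ (p j) w (Pi.single k Complex.I)))
        = 0 := by
  intro i j w
  set c : Fin m := ⟨m - 1, by omega⟩
  have hsmall : ∀ i : Fin m, i.val < m - 1 →
      fderiv ℝ (p i) w = a c • normSqDeriv w i - a i • normSqDeriv w c := fun i hi => by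
    rw [show p i = _ from funext (hpj i hi)]
    exact (((hasFDerivAt_norm_sq_apply w i).const_smul (a c)).sub
      ((hasFDerivAt_norm_sq_apply w c).const_smul (a i))).fderiv
  have hlast : fderiv ℝ (p c) w = imProdDeriv w := by
    rw [show p c = _ from funext hpm]
    exact (hasFDerivAt_im_prod w).fderiv
  have hcases : ∀ i : Fin m, i = c ∨ i.val < m - 1 := fun i =>
    (lt_or_ge i.val (m - 1)).symm.imp_left fun h => Fin.ext (by simp [c]; omega)
  change poissonForm a (fderiv ℝ (p i) w) (fderiv ℝ (p j) w) = 0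
  rcases hcases i with rfl | hi <;> rcases hcases j with rfl | hj
  · exact poissonForm_self a _
  · rw [poissonForm_comm, hlast, hsmall j hj, poissonForm_normSqDeriv_sub_imProdDeriv, neg_zero]
  · rw [hsmall i hi, hlast, poissonForm_normSqDeriv_sub_imProdDeriv]
  · rw [hsmall i hi, hsmall j hj, poissonForm_normSqDeriv_sub_normSqDeriv_sub]
end

section
/- Let V ⊂ ℂ^m be a special Lagrangian m-plane (a real m-dimensional subspace on which the Kähler form ω vanishes and Re Ω restricts to the volume form, Ω = dz_1 ∧ ⋯ ∧ dz_m), and suppose V = U ⊕ W is an orthogonal direct sum of real subspaces with dim U = k. Then the real m-plane I(U) ⊕ W (where I is multiplication by i on ℂ^m) is Lagrangian, and Ω restricted to I(U) ⊕ W equals (±i)^k times its volume form; in particular I(U) ⊕ W is special Lagrangian with phase i^k or −i^k. -/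
/-!
Write `⟨x, y⟩ = ∑ conj xⱼ yⱼ`, so that `g = Re ⟨·, ·⟩`, `ω = Im ⟨·, ·⟩`, and `Ω` evaluated on a
frame is the determinant of the matrix whose rows are the frame vectors. On the Lagrangian plane
`V`, `g`-orthogonality of `U` and `W` upgrades to `⟨u, w⟩ = 0`, so multiplying the `U`-component
by a unit `c` preserves the Hermitian product: `⟨c u + w, c u' + w'⟩ = ⟨u + w, u' + w'⟩`. Hence
`c U ⊕ W` is Lagrangian, and if `(uᵢ)`, `(wⱼ)` are `g`-orthonormal bases of `U`, `W`, then
`(c uᵢ, wⱼ)` is an orthonormal frame of `c U ⊕ W` whose determinant is `c ^ k` times that of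
`(uᵢ, wⱼ)`. The frame `(uᵢ, wⱼ)` of `V` differs from the special Lagrangian frame by a real
orthogonal matrix, so its determinant is `±1`.
-/

open Matrix Module Submodule Set

variable {n ι κ : Type*}

noncomputable abbrev smulSup (c : ℂ) (U W : Submodule ℝ (n → ℂ)) : Submodule ℝ (n → ℂ) :=
  U.map ((LinearMap.lsmul ℂ (n → ℂ) c).restrictScalars ℝ) ⊔ W

theorem mem_smulSup {c : ℂ} {U W : Submodule ℝ (n → ℂ)} {v : n → ℂ} :
    v ∈ smulSup c U W ↔ ∃ u ∈ U, ∃ w ∈ W, c • u + w = v := by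
  simp [smulSup, Submodule.mem_sup]

variable [Fintype n]

noncomputable def reDot : LinearMap.BilinForm ℝ (n → ℂ) :=
  LinearMap.mk₂ ℝ (fun x y => (star x ⬝ᵥ y).re)
    (fun x x' y => by simp [add_dotProduct])
    (fun r x y => by simp [star_smul, smul_dotProduct])
    (fun x y y' => by simp [dotProduct_add])
    (fun r x y => by simp [dotProduct_smul])

theorem reDot_apply (x y : n → ℂ) : reDot x y = (star x ⬝ᵥ y).re := rfl

theorem reDot_comm (x y : n → ℂ) : reDot x y = reDot y x := by
  rw [reDot_apply, reDot_apply, star_dotProduct x y, Complex.star_def, Complex.conj_re]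

theorem reDot_isSymm : (reDot (n := n)).IsSymm :=
  LinearMap.BilinForm.isSymm_def.2 reDot_comm

open ComplexOrder in
theorem reDot_self_pos {x : n → ℂ} (hx : x ≠ 0) : 0 < reDot x x :=
  (Complex.lt_def.1 (dotProduct_star_self_pos_iff.2 hx)).1

def ReOrthonormal [DecidableEq ι] (b : ι → n → ℂ) : Prop :=
  ∀ i i', reDot (b i) (b i') = if i = i' then 1 else 0

def IsIsotropic (V : Submodule ℝ (n → ℂ)) : Prop :=
  ∀ v ∈ V, ∀ v' ∈ V, (star v ⬝ᵥ v').im = 0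

namespace ReOrthonormal

variable [DecidableEq ι] {b : ι → n → ℂ}

theorem linearIndependent (hb : ReOrthonormal b) : LinearIndependent ℝ b :=
  LinearMap.BilinForm.linearIndependent_of_iIsOrtho (fun i i' h => by simpa [h] using hb i i')
    (fun i => by simp [hb i i])

theorem comp [DecidableEq κ] (hb : ReOrthonormal b) {f : κ → ι} (hf : Function.Injective f) :
    ReOrthonormal (b ∘ f) := fun i i' => by
  simp [hb (f i) (f i'), hf.eq_iff]

theorem smul (hb : ReOrthonormal b) {c : ℂ} (hc : ‖c‖ = 1) : ReOrthonormal (c • b) := by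
  intro i i'
  rw [← hb i i', reDot_apply, reDot_apply, Pi.smul_apply, Pi.smul_apply, star_smul,
    smul_dotProduct, dotProduct_smul, smul_smul, smul_eq_mul, Complex.star_def,
    Complex.conj_mul', hc]
  simp

theorem sumElim [DecidableEq κ] (hb : ReOrthonormal b) {b' : κ → n → ℂ} (hb' : ReOrthonormal b')
    (h : ∀ i j, star (b i) ⬝ᵥ b' j = 0) : ReOrthonormal (Sum.elim b b') := by
  rintro (i | i) (j | j)
  · simpa using hb i j
  · simp [reDot_apply, h]
  · simp [reDot_comm (b' i), reDot_apply, h]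
  · simpa using hb' i j

theorem card_le_finrank [Fintype ι] (hb : ReOrthonormal b) {S : Submodule ℝ (n → ℂ)}
    (hbS : ∀ i, b i ∈ S) : Fintype.card ι ≤ finrank ℝ S := by
  rw [← finrank_span_eq_card hb.linearIndependent]
  exact Submodule.finrank_mono (span_le.2 (range_subset_iff.2 hbS))

theorem span_eq [Fintype ι] (hb : ReOrthonormal b) {V : Submodule ℝ (n → ℂ)}
    (hbV : ∀ i, b i ∈ V) (hV : finrank ℝ V = Fintype.card ι) : span ℝ (range b) = V :=
  eq_of_le_of_finrank_eq (span_le.2 (range_subset_iff.2 hbV))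
    (by rw [finrank_span_eq_card hb.linearIndependent, hV])

theorem reDot_sum_smul [Fintype ι] (hb : ReOrthonormal b) (a : ι → ℝ) (j : ι) :
    reDot (b j) (∑ i, a i • b i) = a j := by
  simp [map_sum, hb j]

theorem sum_reDot_smul [Fintype ι] (hb : ReOrthonormal b) {x : n → ℂ}
    (hx : x ∈ span ℝ (range b)) : ∑ j, reDot (b j) x • b j = x := by
  obtain ⟨a, rfl⟩ := (mem_span_range_iff_exists_fun ℝ).1 hx
  simp_rw [hb.reDot_sum_smul]

end ReOrthonormal

theorem exists_reOrthonormal (S : Submodule ℝ (n → ℂ)) :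
    ∃ c : Fin (finrank ℝ S) → n → ℂ, (∀ i, c i ∈ S) ∧ ReOrthonormal c := by
  obtain ⟨v, hv⟩ := LinearMap.BilinForm.exists_orthogonal_basis
    (LinearMap.BilinForm.isSymm_iff.1 (reDot_isSymm.restrict S))
  have hpos : ∀ i, 0 < reDot (v i : n → ℂ) (v i) := fun i =>
    reDot_self_pos (by simpa using v.ne_zero i)
  refine ⟨fun i => (√(reDot (v i : n → ℂ) (v i)))⁻¹ • (v i : n → ℂ),
    fun i => S.smul_mem _ (v i).2, fun i i' => ?_⟩
  simp only [map_smul, LinearMap.smul_apply, smul_eq_mul]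
  split_ifs with h
  · subst h
    rw [← mul_assoc, ← mul_inv, Real.mul_self_sqrt (hpos i).le, inv_mul_cancel₀ (hpos i).ne']
  · simp [show reDot (v i : n → ℂ) (v i') = 0 from hv h]

theorem det_eq_or_eq_neg_of_reOrthonormal [DecidableEq n] {V : Submodule ℝ (n → ℂ)}
    (hV : finrank ℝ V = Fintype.card n) {b c : n → n → ℂ} (hbV : ∀ i, b i ∈ V)
    (hcV : ∀ i, c i ∈ V) (hb : ReOrthonormal b) (hc : ReOrthonormal c) :
    det (of c) = det (of b) ∨ det (of c) = -det (of b) := by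
  let O : Matrix n n ℝ := of fun i j => reDot (b j) (c i)
  have hexpand : ∀ i, ∑ j, O i j • b j = c i := fun i =>
    hb.sum_reDot_smul (by rw [hb.span_eq hbV hV]; exact hcV i)
  have hO : O * Oᵀ = 1 := by
    ext i i'
    rw [mul_apply, one_apply, ← hc i i']
    conv_rhs => rw [← hexpand i']
    simp [map_sum, O, reDot_comm (c i), mul_comm]
  have hmat : of c = O.map Complex.ofRealHom * of b := by
    ext i j
    rw [of_apply, ← hexpand i]
    simp [mul_apply]
  have hdet : det O * det O = 1 := by
    simpa using congrArg det hO
  rw [hmat, det_mul, ← RingHom.mapMatrix_apply, ← RingHom.map_det]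
  rcases mul_self_eq_one_iff.1 hdet with h | h <;> simp [h]

theorem det_of_sumElim_smul {R : Type*} [CommRing R] [DecidableEq n] [Fintype ι] [Fintype κ]
    (e : ι ⊕ κ ≃ n) (c : R) (a : ι → n → R) (a' : κ → n → R) :
    det (of fun i => Sum.elim (c • a) a' (e.symm i)) =
      c ^ Fintype.card ι * det (of fun i => Sum.elim a a' (e.symm i)) := by
  have hrow : (of fun i => Sum.elim (c • a) a' (e.symm i)) =
      of fun i j => Sum.elim (fun _ => c) (fun _ => 1) (e.symm i) *
        of (fun i => Sum.elim a a' (e.symm i)) i j := by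
    ext i j
    simp only [of_apply]
    cases e.symm i <;> simp
  rw [hrow, det_mul_column, e.symm.prod_comp (Sum.elim _ _), Fintype.prod_sum_type]
  simp

theorem finrank_smulSup_le (c : ℂ) (U W : Submodule ℝ (n → ℂ)) :
    finrank ℝ (smulSup c U W) ≤ finrank ℝ U + finrank ℝ W :=
  (finrank_add_le_finrank_add_finrank _ _).trans (Nat.add_le_add_right (finrank_map_le _ _) _)

theorem star_smul_add_dotProduct_smul_add {c : ℂ} (hc : ‖c‖ = 1) {u u' w w' : n → ℂ}
    (huw : star u ⬝ᵥ w' = 0) (hwu : star w ⬝ᵥ u' = 0) :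
    star (c • u + w) ⬝ᵥ (c • u' + w') = star (u + w) ⬝ᵥ (u' + w') := by
  simp only [star_add, star_smul, add_dotProduct, dotProduct_add, smul_dotProduct,
    dotProduct_smul, huw, hwu, smul_eq_mul, Complex.star_def, mul_zero, add_zero]
  have hc' : starRingEnd ℂ c * c = 1 := by simp [Complex.conj_mul', hc]
  linear_combination (star u ⬝ᵥ u') * hc'

theorem IsIsotropic.smulSup {V U W : Submodule ℝ (n → ℂ)} (hV : IsIsotropic V) (hUV : U ≤ V)
    (hWV : W ≤ V) (hUW : ∀ u ∈ U, ∀ w ∈ W, star u ⬝ᵥ w = 0) {c : ℂ} (hc : ‖c‖ = 1) :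
    IsIsotropic (smulSup c U W) := by
  intro v hv v' hv'
  obtain ⟨u, hu, w, hw, rfl⟩ := mem_smulSup.1 hv
  obtain ⟨u', hu', w', hw', rfl⟩ := mem_smulSup.1 hv'
  have hwu : star w ⬝ᵥ u' = 0 := by rw [star_dotProduct, hUW u' hu' w hw, star_zero]
  rw [star_smul_add_dotProduct_smul_add hc (hUW u hu w' hw') hwu]
  exact hV _ (V.add_mem (hUV hu) (hWV hw)) _ (V.add_mem (hUV hu') (hWV hw'))

theorem stmt19 {m : ℕ} (V U W : Submodule ℝ (Fin m → ℂ))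
    (hdim : Module.finrank ℝ V = m)
    (hsup : U ⊔ W = V) (hinf : U ⊓ W = ⊥)
    (hperp : ∀ u ∈ U, ∀ w ∈ W, (∑ j, (starRingEnd ℂ (u j)) * w j).re = 0)
    (hLag : ∀ v ∈ V, ∀ v' ∈ V, (∑ j, (starRingEnd ℂ (v j)) * v' j).im = 0)
    (hSL : ∃ b : Fin m → (Fin m → ℂ), (∀ i, b i ∈ V) ∧
      (∀ i i', (∑ j, (starRingEnd ℂ (b i j)) * b i' j).re = if i = i' then 1 else 0) ∧
      Matrix.det (Matrix.of fun i j => b i j) = 1)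
    (k : ℕ) (hk : k = Module.finrank ℝ U) :
    let P := U.map (LinearMap.restrictScalars ℝ
        (LinearMap.lsmul ℂ (Fin m → ℂ) Complex.I)) ⊔ W
    Module.finrank ℝ P = m ∧
    (∀ v ∈ P, ∀ v' ∈ P, (∑ j, (starRingEnd ℂ (v j)) * v' j).im = 0) ∧
    ∃ cb : Fin m → (Fin m → ℂ), (∀ i, cb i ∈ P) ∧
      (∀ i i', (∑ j, (starRingEnd ℂ (cb i j)) * cb i' j).re = if i = i' then 1 else 0) ∧
      (Matrix.det (Matrix.of fun i j => cb i j) = Complex.I ^ k ∨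
        Matrix.det (Matrix.of fun i j => cb i j) = -(Complex.I ^ k)) := by
  obtain ⟨b, hbV, hb, hbdet⟩ := hSL
  have hUV : U ≤ V := hsup ▸ le_sup_left
  have hWV : W ≤ V := hsup ▸ le_sup_right
  have hUW : ∀ u ∈ U, ∀ w ∈ W, star u ⬝ᵥ w = 0 := fun u hu w hw =>
    Complex.ext (hperp u hu w hw) (hLag u (hUV hu) w (hWV hw))
  have hrank : finrank ℝ U + finrank ℝ W = m := by
    rw [← finrank_sup_add_finrank_inf_eq, hsup, hinf, finrank_bot, hdim, add_zero]
  obtain ⟨a, haU, ha⟩ := exists_reOrthonormal U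
  obtain ⟨a', haW, ha'⟩ := exists_reOrthonormal W
  let e : Fin (finrank ℝ U) ⊕ Fin (finrank ℝ W) ≃ Fin m := finSumFinEquiv.trans (finCongr hrank)
  have hc : ReOrthonormal (Sum.elim a a' ∘ e.symm) :=
    (ha.sumElim ha' fun i j => hUW _ (haU i) _ (haW j)).comp e.symm.injective
  have hcb : ReOrthonormal (Sum.elim (Complex.I • a) a' ∘ e.symm) :=
    ((ha.smul Complex.norm_I).sumElim ha' fun i j => by
      simp [star_smul, smul_dotProduct, hUW _ (haU i) _ (haW j)]).comp e.symm.injective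
  have hcbP : ∀ s, Sum.elim (Complex.I • a) a' s ∈ smulSup Complex.I U W := by
    rintro (j | j)
    · exact mem_smulSup.2 ⟨a j, haU j, 0, zero_mem W, add_zero _⟩
    · exact mem_sup_right (haW j)
  have hcV : ∀ s, Sum.elim a a' s ∈ V := by
    rintro (j | j)
    exacts [hUV (haU j), hWV (haW j)]
  refine ⟨le_antisymm ((finrank_smulSup_le _ U W).trans hrank.le)
      (by simpa using hcb.card_le_finrank fun i => hcbP (e.symm i)),
    IsIsotropic.smulSup hLag hUV hWV hUW Complex.norm_I, _, fun i => hcbP (e.symm i), hcb, ?_⟩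
  rw [det_of_sumElim_smul, Fintype.card_fin, hk]
  rcases det_eq_or_eq_neg_of_reOrthonormal (by simpa using hdim) hbV (fun i => hcV (e.symm i))
    hb hc with h | h <;> simp [h, hbdet]
end
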